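/- Let p ∈ (1,2] and δ ≥ 0. Then for all λ ≥ 0 and all t ≥ 0 one has φ(λ·t) ≤ max{λ^p, λ²}·φ(t); in particular φ(λ·t) ≤ max{1, λ²}·φ(t). -/

import Mathlib

/-!
Substituting `s = λ u` gives `φ(λ t) = ∫₀ᵗ λ φ'(λ u) du`, so it suffices to compare integrands:
`λ φ'(λ u) = λ² (δ + λ u)^(p-2) u`, and since `p - 2 ≤ 0` the power is decreasing, with
`δ + λ u ≥ λ (δ + u)` for `λ ≤ 1` and `δ + λ u ≥ δ + u` for `λ ≥ 1`. This yields
`λ φ'(λ u) ≤ λ² max(λ^(p-2), 1) φ'(u) = max(λ^p, λ²) φ'(u)`.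
-/

/-- The N-function `φ = φ_{p,δ}`, `φ(t) = ∫₀ᵗ (δ+s)^(p-2)·s ds`. -/
noncomputable def phiFun (p δ t : ℝ) : ℝ := ∫ s in (0:ℝ)..t, (δ + s) ^ (p - 2) * s

open MeasureTheory intervalIntegral

noncomputable def phiDeriv (p δ s : ℝ) : ℝ := (δ + s) ^ (p - 2) * s

lemma phiDeriv_nonneg (p : ℝ) {δ s : ℝ} (hδ : 0 ≤ δ) (hs : 0 ≤ s) : 0 ≤ phiDeriv p δ s :=
  mul_nonneg (Real.rpow_nonneg (by linarith) _) hs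

lemma phiFun_nonneg (p : ℝ) {δ t : ℝ} (hδ : 0 ≤ δ) (ht : 0 ≤ t) : 0 ≤ phiFun p δ t :=
  integral_nonneg ht fun _ hs ↦ phiDeriv_nonneg p hδ hs.1

-- On `[0, t]` the integrand is dominated by the continuous function `s ↦ (δ + s) ^ (p - 1)`.
lemma intervalIntegrable_phiDeriv {p δ t : ℝ} (hp : 1 ≤ p) (hδ : 0 ≤ δ) (ht : 0 ≤ t) :
    IntervalIntegrable (phiDeriv p δ) volume 0 t := by
  have hdom : IntervalIntegrable (fun s ↦ (δ + s) ^ (p - 1)) volume 0 t :=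
    ((Real.continuous_rpow_const (by linarith)).comp (continuous_const_add δ)).intervalIntegrable _ _
  refine hdom.mono_fun (by unfold phiDeriv; fun_prop) ?_
  rw [Set.uIoc_of_le ht]
  filter_upwards [ae_restrict_mem measurableSet_Ioc] with s hs
  have hδs : 0 < δ + s := by linarith [hs.1]
  rw [Real.norm_of_nonneg (phiDeriv_nonneg p hδ hs.1.le), Real.norm_of_nonneg (by positivity),
    phiDeriv, show p - 1 = (p - 2) + 1 by ring, Real.rpow_add_one hδs.ne']
  gcongr
  linarith

lemma rpow_add_mul_le_max {q δ c u : ℝ} (hq : q ≤ 0) (hc : 0 < c) (hδ : 0 ≤ δ) (hu : 0 ≤ u)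
    (hδu : 0 < δ + u) : (δ + c * u) ^ q ≤ max (c ^ q) 1 * (δ + u) ^ q := by
  rcases le_total c 1 with hc1 | hc1
  · calc (δ + c * u) ^ q ≤ (c * (δ + u)) ^ q :=
          Real.rpow_le_rpow_of_nonpos (by positivity) (by nlinarith) hq
      _ = c ^ q * (δ + u) ^ q := Real.mul_rpow hc.le hδu.le
      _ ≤ max (c ^ q) 1 * (δ + u) ^ q := by gcongr; exact le_max_left _ _
  · calc (δ + c * u) ^ q ≤ (δ + u) ^ q := Real.rpow_le_rpow_of_nonpos hδu (by nlinarith) hq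
      _ ≤ max (c ^ q) 1 * (δ + u) ^ q := le_mul_of_one_le_left (by positivity) (le_max_right _ _)

lemma mul_phiDeriv_mul_le {p δ c u : ℝ} (hp2 : p ≤ 2) (hδ : 0 ≤ δ) (hc : 0 ≤ c) (hu : 0 ≤ u) :
    c * phiDeriv p δ (c * u) ≤ max (c ^ p) (c ^ (2:ℝ)) * phiDeriv p δ u := by
  rcases hc.eq_or_lt with rfl | hc
  · simpa using mul_nonneg (le_max_of_le_right (by positivity)) (phiDeriv_nonneg p hδ hu)
  rcases hu.eq_or_lt with rfl | hu
  · simp [phiDeriv]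
  have hmax : max (c ^ p) (c ^ (2:ℝ)) = c ^ (2:ℝ) * max (c ^ (p - 2)) 1 := by
    rw [mul_max_of_nonneg _ _ (by positivity), ← Real.rpow_add hc, mul_one]
    norm_num
  calc c * phiDeriv p δ (c * u) = c ^ (2:ℝ) * (δ + c * u) ^ (p - 2) * u := by
        rw [phiDeriv, Real.rpow_two]; ring
    _ ≤ c ^ (2:ℝ) * (max (c ^ (p - 2)) 1 * (δ + u) ^ (p - 2)) * u := by
        gcongr
        exact rpow_add_mul_le_max (by linarith) hc hδ hu.le (by linarith)
    _ = max (c ^ p) (c ^ (2:ℝ)) * phiDeriv p δ u := by rw [hmax, phiDeriv]; ring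

lemma phiFun_mul_eq (p δ c t : ℝ) :
    phiFun p δ (c * t) = ∫ u in (0:ℝ)..t, c * phiDeriv p δ (c * u) := by
  have h := smul_integral_comp_mul_left (a := 0) (b := t) (phiDeriv p δ) c
  rw [smul_eq_mul, mul_zero] at h
  rw [intervalIntegral.integral_const_mul, h]
  rfl

lemma phiFun_mul_le {p δ c t : ℝ} (hp : 1 ≤ p) (hp2 : p ≤ 2) (hδ : 0 ≤ δ) (hc : 0 ≤ c)
    (ht : 0 ≤ t) : phiFun p δ (c * t) ≤ max (c ^ p) (c ^ (2:ℝ)) * phiFun p δ t := by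
  have hscaled : IntervalIntegrable (fun u ↦ c * phiDeriv p δ (c * u)) volume 0 t := by
    rcases hc.eq_or_lt with rfl | hc
    · simp
    have := (intervalIntegrable_phiDeriv hp hδ (mul_nonneg hc.le ht)).comp_mul_left (c := c)
    simp only [zero_div, mul_div_cancel_left₀ _ hc.ne'] at this
    exact this.const_mul c
  rw [phiFun_mul_eq, phiFun, ← intervalIntegral.integral_const_mul]
  exact integral_mono_on ht hscaled ((intervalIntegrable_phiDeriv hp hδ ht).const_mul _)
    fun u hu ↦ mul_phiDeriv_mul_le hp2 hδ hc hu.1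

lemma max_rpow_le_max_one_rpow {c p q : ℝ} (hc : 0 ≤ c) (hp : 0 ≤ p) (hpq : p ≤ q) :
    max (c ^ p) (c ^ q) ≤ max 1 (c ^ q) := by
  refine max_le ?_ (le_max_right _ _)
  rcases le_total c 1 with hc1 | hc1
  · exact le_max_of_le_left (Real.rpow_le_one hc hc1 hp)
  · exact le_max_of_le_right (Real.rpow_le_rpow_of_exponent_le hc1 hpq)

/-- For `p ∈ (1,2]` and `δ ≥ 0`, for all `λ ≥ 0` and `t ≥ 0` one has
`φ(λ·t) ≤ max{λ^p, λ²}·φ(t)`, and in particular `φ(λ·t) ≤ max{1, λ²}·φ(t)`. -/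
theorem phi_scaling (p δ : ℝ) (hp : 1 < p) (hp2 : p ≤ 2) (hδ : 0 ≤ δ)
    (lam t : ℝ) (hlam : 0 ≤ lam) (ht : 0 ≤ t) :
    phiFun p δ (lam * t) ≤ max (lam ^ p) (lam ^ (2:ℝ)) * phiFun p δ t ∧
      phiFun p δ (lam * t) ≤ max 1 (lam ^ (2:ℝ)) * phiFun p δ t := by
  have hscaling := phiFun_mul_le hp.le hp2 hδ hlam ht
  refine ⟨hscaling, hscaling.trans ?_⟩
  exact mul_le_mul_of_nonneg_right (max_rpow_le_max_one_rpow hlam (by linarith) hp2)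
    (phiFun_nonneg p hδ ht)
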